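/- arXiv:1001.3790 — 4 statements merged into one kernel-verified Lean document; each statement's English description precedes it below -/
import Mathlib

section
/- The R-transform is an increasing function: the map R(w) = m⁻¹(−w) − 1/w is monotone increasing on its domain {w : −w ∈ m((−∞, A))} (a subset of the negative reals). If moreover the probability measure μ is not a single mass point (μ ≠ δ_{x₀} for every x₀ ∈ ℝ), then R is strictly increasing on this domain. -/
/-!
With `m` the Stieltjes transform, `R (-m s) = s + 1 / m s`, so it suffices that `m` is strictly
increasing and `s ↦ s + 1 / m s` is antitone on `(-∞, A)`. For `s₂ < s₁ < A`, the function
`(x - s₁)⁻¹` is a convex function of `(x - s₂)⁻¹` on `x > s₁`. Integrating its tangent line at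
the point `c = s₂ + 1 / m s₂`, where `(c - s₂)⁻¹ = m s₂`, gives Jensen's inequality
`(c - s₁)⁻¹ ≤ m s₁`, which is `s₁ + 1 / m s₁ ≤ s₂ + 1 / m s₂` and also yields
`m s₂ < m s₁`. The gap in the tangent inequality is a positive multiple of `(x - c) ^ 2`,
so equality forces `μ = δ_c`.
-/

open MeasureTheory Set

noncomputable def stieltjesTransform (μ : Measure ℝ) (s : ℝ) : ℝ := ∫ x, (x - s)⁻¹ ∂μ

lemma inv_sub_sub_tangent_pos {s₁ s₂ c x : ℝ} (h₂₁ : s₂ < s₁) (hx : s₁ < x) (hc : s₁ < c)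
    (hxc : x ≠ c) :
    0 < (x - s₁)⁻¹ - (c - s₁)⁻¹ - ((c - s₂) / (c - s₁)) ^ 2 * ((x - s₂)⁻¹ - (c - s₂)⁻¹) := by
  have hx₁ : 0 < x - s₁ := by linarith
  have hx₂ : 0 < x - s₂ := by linarith
  have hc₁ : 0 < c - s₁ := by linarith
  have hc₂ : 0 < c - s₂ := by linarith
  have hδ : 0 < s₁ - s₂ := by linarith
  have hxc' : x - c ≠ 0 := sub_ne_zero.2 hxc
  have key : (x - s₁)⁻¹ - (c - s₁)⁻¹ - ((c - s₂) / (c - s₁)) ^ 2 * ((x - s₂)⁻¹ - (c - s₂)⁻¹) =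
      (s₁ - s₂) * (x - c) ^ 2 / ((x - s₁) * (x - s₂) * (c - s₁) ^ 2) := by
    field_simp
    ring
  rw [key]
  positivity

lemma inv_sub_sub_tangent_nonneg {s₁ s₂ c x : ℝ} (h₂₁ : s₂ < s₁) (hx : s₁ < x) (hc : s₁ < c) :
    0 ≤ (x - s₁)⁻¹ - (c - s₁)⁻¹ - ((c - s₂) / (c - s₁)) ^ 2 * ((x - s₂)⁻¹ - (c - s₂)⁻¹) := by
  rcases eq_or_ne x c with rfl | hxc
  · simp
  · exact (inv_sub_sub_tangent_pos h₂₁ hx hc hxc).le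

section

variable {μ : Measure ℝ} {A s s₁ s₂ c : ℝ}

lemma ae_le_of_measure_Iio_eq_zero (hsupp : μ (Iio A) = 0) : ∀ᵐ x ∂μ, A ≤ x := by
  rw [ae_iff]
  simp only [not_le]
  exact hsupp

lemma integrable_inv_sub [IsFiniteMeasure μ] (hsupp : μ (Iio A) = 0) (hs : s < A) :
    Integrable (fun x ↦ (x - s)⁻¹) μ := by
  refine .of_bound (by fun_prop) (A - s)⁻¹ ?_
  filter_upwards [ae_le_of_measure_Iio_eq_zero hsupp] with x hx
  rw [Real.norm_of_nonneg (inv_nonneg.2 (by linarith))]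
  exact inv_anti₀ (by linarith) (by linarith)

lemma integrable_inv_sub_sub_tangent [IsFiniteMeasure μ] (hsupp : μ (Iio A) = 0) (h₁ : s₁ < A)
    (h₂ : s₂ < A) (a b k : ℝ) :
    Integrable (fun x ↦ (x - s₁)⁻¹ - a - k * ((x - s₂)⁻¹ - b)) μ := by
  have h₁ := integrable_inv_sub hsupp h₁
  have h₂ := integrable_inv_sub hsupp h₂
  fun_prop

variable [IsProbabilityMeasure μ]

lemma stieltjesTransform_le (hsupp : μ (Iio A) = 0) (hs : s < A) :
    stieltjesTransform μ s ≤ (A - s)⁻¹ := by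
  calc stieltjesTransform μ s ≤ ∫ _, (A - s)⁻¹ ∂μ := by
        refine integral_mono_ae (integrable_inv_sub hsupp hs) (integrable_const _) ?_
        filter_upwards [ae_le_of_measure_Iio_eq_zero hsupp] with x hx
        exact inv_anti₀ (by linarith) (by linarith)
    _ = (A - s)⁻¹ := by simp

lemma integral_inv_sub_sub_tangent (hsupp : μ (Iio A) = 0) (h₁ : s₁ < A) (h₂ : s₂ < A)
    (a b k : ℝ) :
    ∫ x, ((x - s₁)⁻¹ - a - k * ((x - s₂)⁻¹ - b)) ∂μ =
      stieltjesTransform μ s₁ - a - k * (stieltjesTransform μ s₂ - b) := by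
  have h₁ := integrable_inv_sub hsupp h₁
  have h₂ := integrable_inv_sub hsupp h₂
  rw [integral_sub, integral_sub h₁ (integrable_const a), integral_const_mul,
    integral_sub h₂ (integrable_const b)]
  · simp [stieltjesTransform]
  · exact h₁.sub (integrable_const a)
  · exact (h₂.sub (integrable_const b)).const_mul k

lemma stieltjesTransform_pos (hsupp : μ (Iio A) = 0) (hs : s < A) :
    0 < stieltjesTransform μ s := by
  have hpos : ∀ᵐ x ∂μ, 0 < (x - s)⁻¹ := by
    filter_upwards [ae_le_of_measure_Iio_eq_zero hsupp] with x hx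
    exact inv_pos.2 (by linarith)
  refine (integral_nonneg_of_ae (hpos.mono fun _ ↦ le_of_lt)).lt_of_ne' fun h ↦ ?_
  have hzero := (integral_eq_zero_iff_of_nonneg_ae (hpos.mono fun _ ↦ le_of_lt)
    (integrable_inv_sub hsupp hs)).1 h
  obtain ⟨x, hx, hx0⟩ := (hpos.and hzero).exists
  exact hx.ne' hx0

lemma tangent_le_stieltjesTransform (hsupp : μ (Iio A) = 0) (h₂₁ : s₂ < s₁) (h₁ : s₁ < A)
    (hc : s₁ < c) :
    (c - s₁)⁻¹ + ((c - s₂) / (c - s₁)) ^ 2 * (stieltjesTransform μ s₂ - (c - s₂)⁻¹) ≤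
      stieltjesTransform μ s₁ := by
  rw [← sub_nonneg, ← sub_sub, ← integral_inv_sub_sub_tangent hsupp h₁ (h₂₁.trans h₁)]
  refine integral_nonneg_of_ae ?_
  filter_upwards [ae_le_of_measure_Iio_eq_zero hsupp] with x hx
  exact inv_sub_sub_tangent_nonneg h₂₁ (by linarith) hc

lemma tangent_lt_stieltjesTransform (hsupp : μ (Iio A) = 0) (h₂₁ : s₂ < s₁) (h₁ : s₁ < A)
    (hc : s₁ < c) (hμ : μ ≠ Measure.dirac c) :
    (c - s₁)⁻¹ + ((c - s₂) / (c - s₁)) ^ 2 * (stieltjesTransform μ s₂ - (c - s₂)⁻¹) <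
      stieltjesTransform μ s₁ := by
  rw [← sub_pos, ← sub_sub, ← integral_inv_sub_sub_tangent hsupp h₁ (h₂₁.trans h₁)]
  have hA := ae_le_of_measure_Iio_eq_zero hsupp
  have hnonneg : ∀ᵐ x ∂μ, 0 ≤ (x - s₁)⁻¹ - (c - s₁)⁻¹ -
      ((c - s₂) / (c - s₁)) ^ 2 * ((x - s₂)⁻¹ - (c - s₂)⁻¹) := by
    filter_upwards [hA] with x hx
    exact inv_sub_sub_tangent_nonneg h₂₁ (by linarith) hc
  have hint := integrable_inv_sub_sub_tangent hsupp h₁ (h₂₁.trans h₁) (c - s₁)⁻¹ (c - s₂)⁻¹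
    (((c - s₂) / (c - s₁)) ^ 2)
  refine (integral_nonneg_of_ae hnonneg).lt_of_ne' fun h ↦ hμ ?_
  have hzero := (integral_eq_zero_iff_of_nonneg_ae hnonneg hint).1 h
  have hdirac : ∀ᵐ x ∂μ, x = c := by
    filter_upwards [hA, hzero] with x hx hx0
    by_contra hxc
    exact (inv_sub_sub_tangent_pos h₂₁ (by linarith) hc hxc).ne' hx0
  simpa using (ProbabilityTheory.hasLaw_dirac_of_ae_eq (X := id) hdirac).map_eq

lemma lt_add_inv_stieltjesTransform (hsupp : μ (Iio A) = 0) (h₂₁ : s₂ < s₁) (h₁ : s₁ < A) :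
    s₁ < s₂ + (stieltjesTransform μ s₂)⁻¹ := by
  have h₂ : s₂ < A := h₂₁.trans h₁
  have := (le_inv_comm₀ (sub_pos.2 h₂) (stieltjesTransform_pos hsupp h₂)).2
    (stieltjesTransform_le hsupp h₂)
  linarith

lemma inv_sub_le_stieltjesTransform (hsupp : μ (Iio A) = 0) (h₂₁ : s₂ < s₁) (h₁ : s₁ < A) :
    (s₂ + (stieltjesTransform μ s₂)⁻¹ - s₁)⁻¹ ≤ stieltjesTransform μ s₁ := by
  simpa using tangent_le_stieltjesTransform hsupp h₂₁ h₁
    (lt_add_inv_stieltjesTransform hsupp h₂₁ h₁)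

lemma inv_sub_lt_stieltjesTransform (hsupp : μ (Iio A) = 0) (h₂₁ : s₂ < s₁) (h₁ : s₁ < A)
    (hμ : ∀ x₀, μ ≠ Measure.dirac x₀) :
    (s₂ + (stieltjesTransform μ s₂)⁻¹ - s₁)⁻¹ < stieltjesTransform μ s₁ := by
  simpa using tangent_lt_stieltjesTransform hsupp h₂₁ h₁
    (lt_add_inv_stieltjesTransform hsupp h₂₁ h₁) (hμ _)

lemma stieltjesTransform_strictMonoOn (hsupp : μ (Iio A) = 0) :
    StrictMonoOn (stieltjesTransform μ) (Iio A) := by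
  intro s₂ _ s₁ h₁ h₂₁
  have hc := lt_add_inv_stieltjesTransform hsupp h₂₁ h₁
  calc stieltjesTransform μ s₂ = (s₂ + (stieltjesTransform μ s₂)⁻¹ - s₂)⁻¹ := by simp
    _ < (s₂ + (stieltjesTransform μ s₂)⁻¹ - s₁)⁻¹ := inv_strictAnti₀ (sub_pos.2 hc) (by linarith)
    _ ≤ stieltjesTransform μ s₁ := inv_sub_le_stieltjesTransform hsupp h₂₁ h₁

lemma antitoneOn_add_inv_stieltjesTransform (hsupp : μ (Iio A) = 0) :
    AntitoneOn (fun s ↦ s + (stieltjesTransform μ s)⁻¹) (Iio A) := by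
  intro s₂ _ s₁ h₁ h₂₁
  rcases h₂₁.eq_or_lt with rfl | h₂₁
  · rfl
  have hc := lt_add_inv_stieltjesTransform hsupp h₂₁ h₁
  have := inv_le_of_inv_le₀ (sub_pos.2 hc) (inv_sub_le_stieltjesTransform hsupp h₂₁ h₁)
  dsimp only
  linarith

lemma strictAntiOn_add_inv_stieltjesTransform (hsupp : μ (Iio A) = 0)
    (hμ : ∀ x₀, μ ≠ Measure.dirac x₀) :
    StrictAntiOn (fun s ↦ s + (stieltjesTransform μ s)⁻¹) (Iio A) := by
  intro s₂ _ s₁ h₁ h₂₁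
  have hc := lt_add_inv_stieltjesTransform hsupp h₂₁ h₁
  have := inv_lt_of_inv_lt₀ (sub_pos.2 hc) (inv_sub_lt_stieltjesTransform hsupp h₂₁ h₁ hμ)
  dsimp only
  linarith

end

/-- **The R-transform is an increasing function.** With `m` the Stieltjes transform of `μ`
(injective on `(-∞, A)`) and `minv` its inverse on the image, the R-transform
`R(w) = m⁻¹(-w) - 1/w` is monotone increasing on its domain
`{w : -w ∈ m((-∞, A))}`; if moreover `μ` is not a single mass point, `R` is strictly
increasing there. -/
theorem r_transform_increasing (A : ℝ) (μ : Measure ℝ) [IsProbabilityMeasure μ]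
    (hsupp : μ (Set.Iio A) = 0)
    (m : ℝ → ℝ) (hm : ∀ s, m s = ∫ x, (x - s)⁻¹ ∂μ)
    (minv : ℝ → ℝ) (hminv : ∀ s < A, minv (m s) = s)
    (R : ℝ → ℝ) (hR : ∀ w, R w = minv (-w) - 1 / w)
    (D : Set ℝ) (hD : D = {w : ℝ | -w ∈ m '' Set.Iio A}) :
    MonotoneOn R D ∧
      ((∀ x₀ : ℝ, μ ≠ MeasureTheory.Measure.dirac x₀) → StrictMonoOn R D) := by
  obtain rfl : m = stieltjesTransform μ := funext hm
  obtain rfl : D = (fun s ↦ -stieltjesTransform μ s) '' Iio A := by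
    ext w
    simp [hD, neg_eq_iff_eq_neg]
  have hRm : ∀ s < A, R (-stieltjesTransform μ s) = s + (stieltjesTransform μ s)⁻¹ := by
    intro s hs
    rw [hR, neg_neg, hminv s hs, one_div, inv_neg, sub_neg_eq_add]
  have hmono := stieltjesTransform_strictMonoOn hsupp
  refine ⟨?_, fun hμ ↦ ?_⟩
  · rintro _ ⟨s₁, h₁, rfl⟩ _ ⟨s₂, h₂, rfl⟩ hw
    rw [hRm s₁ h₁, hRm s₂ h₂]
    exact antitoneOn_add_inv_stieltjesTransform hsupp h₂ h₁
      ((hmono.le_iff_le h₂ h₁).1 (neg_le_neg_iff.1 hw))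
  · rintro _ ⟨s₁, h₁, rfl⟩ _ ⟨s₂, h₂, rfl⟩ hw
    rw [hRm s₁ h₁, hRm s₂ h₂]
    exact strictAntiOn_add_inv_stieltjesTransform hsupp hμ h₂ h₁
      ((hmono.lt_iff_lt h₂ h₁).1 (neg_lt_neg_iff.1 hw))
end

section
/- Eigenvalue structure of the 1RSB overlap matrix: for all real numbers q, p, c, the characteristic polynomial of the n × n matrix Q = q·J + p·D + c·I equals (X − (k·m·q + m·p + c)) · (X − (m·p + c))^{k−1} · (X − c)^{k·m − k}. Equivalently, Q has eigenvalue k·m·q + m·p + c with multiplicity 1, eigenvalue m·p + c with multiplicity k − 1, and eigenvalue c with multiplicity k·m − k. -/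
/-!
Write `Q - c • 1 = U N Uᵀ`, where `U` is the `km × k` indicator matrix of the blocks and
`N = q J_k + p I_k`; then `Uᵀ U = m I_k`. Since `AB` and `BA` have the same characteristic
polynomial up to a power of `X`, `χ(U N Uᵀ) = X^(km - k) χ(m N)`, and `m N` is the scalar shift
by `m p` of the rank-one matrix `m q 𝟙 𝟙ᵀ`, whose characteristic polynomial is
`X^(k-1) (X - k m q)`. Undoing the shift by `c` gives the three eigenvalues.
-/

open Matrix Polynomial
open scoped Kronecker

namespace Matrix

variable {R ι κ : Type*} [CommRing R] [Fintype ι] [DecidableEq ι] [Fintype κ] [DecidableEq κ]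

theorem charpoly_add_scalar (M : Matrix ι ι R) (μ : R) :
    (M + scalar ι μ).charpoly = M.charpoly.comp (X - C μ) := by
  simpa [sub_eq_add_neg] using charpoly_sub_scalar M (-μ)

theorem charpoly_smul_of_one_add_scalar [Nonempty ι] (a b : R) :
    (a • of 1 + scalar ι b).charpoly =
      (X - C (Fintype.card ι * a + b)) * (X - C b) ^ (Fintype.card ι - 1) := by
  have hrank_one : a • (of 1 : Matrix ι ι R) = vecMulVec (fun _ => a) 1 := by
    ext; simp [vecMulVec_apply]
  obtain ⟨n, hn⟩ := Nat.exists_eq_add_one_of_ne_zero (Fintype.card_ne_zero (α := ι))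
  rw [charpoly_add_scalar, hrank_one, charpoly_vecMulVec]
  simp [dotProduct, hn, smul_eq_C_mul, pow_succ]
  ring

theorem charpoly_kronecker_of_one [Nonempty κ] (N : Matrix ι ι R) :
    (N ⊗ₖ (of 1 : Matrix κ κ R)).charpoly =
      X ^ (Fintype.card ι * Fintype.card κ - Fintype.card ι) *
        ((Fintype.card κ : R) • N).charpoly := by
  let U : Matrix (ι × κ) ι R := of fun x j => if x.1 = j then 1 else 0
  have hfactor : N ⊗ₖ (of 1 : Matrix κ κ R) = U * (N * Uᵀ) := by
    ext x y
    simp [U, mul_apply]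
  have hgram : Uᵀ * U = (Fintype.card κ : R) • 1 := by
    ext i j
    by_cases hij : i = j <;> simp [U, mul_apply, Fintype.sum_prod_type, hij, eq_comm]
  have hle : Fintype.card ι ≤ Fintype.card (ι × κ) := by
    rw [Fintype.card_prod]; exact Nat.le_mul_of_pos_right _ Fintype.card_pos
  rw [hfactor, charpoly_mul_comm_of_le _ _ hle, Fintype.card_prod, Matrix.mul_assoc, hgram,
    mul_smul_comm, mul_one]

end Matrix

/-- **Eigenvalue structure of the 1RSB overlap matrix.** For the `(k·m) × (k·m)` matrix
`Q = q·J + p·D + c·I` (with `J` the all-ones matrix and `D` the block-diagonal matrix of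
`k` all-ones `m × m` blocks), the characteristic polynomial is
`(X - (k m q + m p + c)) (X - (m p + c))^(k-1) (X - c)^(k m - k)`. -/
theorem charpoly_oneRSB_overlap (k m : ℕ) (hk : 0 < k) (hm : 0 < m)
    (J D : Matrix (Fin k × Fin m) (Fin k × Fin m) ℝ)
    (hJ : ∀ x y, J x y = 1)
    (hD : ∀ x y, D x y = if x.1 = y.1 then 1 else 0)
    (q p c : ℝ) :
    (q • J + p • D + c • (1 : Matrix (Fin k × Fin m) (Fin k × Fin m) ℝ)).charpoly =
      (X - C ((k : ℝ) * m * q + m * p + c)) *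
        (X - C ((m : ℝ) * p + c)) ^ (k - 1) *
        (X - C c) ^ (k * m - k) := by
  have : NeZero k := ⟨hk.ne'⟩
  have : NeZero m := ⟨hm.ne'⟩
  have hQ : q • J + p • D + c • 1 = (q • of 1 + p • 1 : Matrix (Fin k) (Fin k) ℝ) ⊗ₖ of 1 +
      scalar _ c := by
    ext x y
    by_cases h₁ : x.1 = y.1 <;> by_cases h₂ : x.2 = y.2 <;>
      simp [hJ, hD, one_apply, diagonal_apply, Prod.ext_iff, h₁, h₂]
  have hN : (m : ℝ) • (q • of 1 + p • 1 : Matrix (Fin k) (Fin k) ℝ) =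
      (m * q) • of 1 + scalar _ (m * p) := by
    ext i j
    by_cases h : i = j <;> simp [h, one_apply, mul_add]
  rw [hQ, charpoly_add_scalar, charpoly_kronecker_of_one, Fintype.card_fin, Fintype.card_fin, hN,
    charpoly_smul_of_one_add_scalar, Fintype.card_fin]
  simp only [mul_comp, pow_comp, sub_comp, add_comp, X_comp, C_comp, map_add, mul_assoc]
  ring
end

section
/- Diagonal of the LQ factor via inverse Gram matrices: for every k ∈ {0, 1, …, K−1}, let H_k denote the (k+1) × N matrix consisting of the first k+1 rows of H. Then the Gram matrix M_k = H_k · H_kᴴ is invertible, and the bottom-right entry of its inverse satisfies (M_k⁻¹)_{k,k} = |L_{k,k}|⁻²; equivalently, |L_{k,k}|² = 1 / [(H_k H_kᴴ)⁻¹]_{k,k}. -/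
open Matrix OrderDual

/-!
Restricting `H = L Q̄` to its first `k + 1` rows gives `Hₖ = Lₖ Q̄ₖ`, where `Lₖ` is the leading
`(k+1) × (k+1)` block of `L`: the rows of `L` it keeps vanish beyond column `k`. The rows of `Q̄ₖ`
are still orthonormal, so `Hₖ Hₖᴴ = Lₖ Lₖᴴ` and `(Hₖ Hₖᴴ)⁻¹ = (Lₖ⁻¹)ᴴ Lₖ⁻¹`. Since `Lₖ⁻¹` is lower
triangular, its last column is `(Lₖ)_{k,k}⁻¹` times the last basis vector, whence the corner entry
`|L_{k,k}|⁻²`.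
-/

namespace Matrix

section LowerTriangular

variable {m R : Type*} [LinearOrder m]

theorem IsLowerTriangular.mul_apply_self [Fintype m] [NonUnitalNonAssocSemiring R]
    {A B : Matrix m m R} (hA : A.IsLowerTriangular) (hB : B.IsLowerTriangular) (i : m) :
    (A * B) i i = A i i * B i i := by
  rw [mul_apply, Finset.sum_eq_single i _ (by simp)]
  intro j _ hji
  rcases lt_or_gt_of_ne hji with hlt | hgt
  · rw [hB (show toDual i < toDual j from hlt), mul_zero]
  · rw [hA (show toDual j < toDual i from hgt), zero_mul]

theorem IsLowerTriangular.isUnit_det [Fintype m] [CommRing R] {L : Matrix m m R}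
    (hL : L.IsLowerTriangular) (hdiag : ∀ i, IsUnit (L i i)) : IsUnit L.det := by
  rw [det_of_isLowerTriangular L hL]
  exact IsUnit.prod_univ_iff.mpr hdiag

theorem IsLowerTriangular.inv_apply_self [Fintype m] [Field R] {L : Matrix m m R}
    (hL : L.IsLowerTriangular) (hdiag : ∀ i, L i i ≠ 0) (i : m) :
    L⁻¹ i i = (L i i)⁻¹ := by
  have hdet := hL.isUnit_det fun i => (hdiag i).isUnit
  have : Invertible L := L.invertibleOfIsUnitDet hdet
  have hinv : (L⁻¹).IsLowerTriangular := blockTriangular_inv_of_blockTriangular hL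
  have h := hinv.mul_apply_self hL i
  rw [nonsing_inv_mul L hdet, one_apply_eq] at h
  exact eq_inv_of_mul_eq_one_left h.symm

theorem IsLowerTriangular.mul_conjTranspose_inv_apply_of_isTop [Fintype m] {𝕜 : Type*}
    [RCLike 𝕜] {L : Matrix m m 𝕜} (hL : L.IsLowerTriangular) (hdiag : ∀ i, L i i ≠ 0) {j : m}
    (hj : IsTop j) : (L * Lᴴ)⁻¹ j j = ((‖L j j‖ ^ 2)⁻¹ : ℝ) := by
  have : Invertible L := L.invertibleOfIsUnitDet (hL.isUnit_det fun i => (hdiag i).isUnit)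
  have hinv : (L⁻¹).IsLowerTriangular := blockTriangular_inv_of_blockTriangular hL
  have hcol : ∀ i, i ≠ j → L⁻¹ i j = 0 := fun i hij =>
    hinv (show i < j from lt_of_le_of_ne (hj i) hij)
  rw [mul_inv_rev, ← conjTranspose_nonsing_inv, mul_apply,
    Finset.sum_eq_single j (fun i _ hij => by rw [hcol i hij, mul_zero]) (by simp),
    conjTranspose_apply, hL.inv_apply_self hdiag, RCLike.star_def, RCLike.conj_mul, norm_inv,
    ← RCLike.ofReal_pow, inv_pow]

theorem IsLowerTriangular.isUnit_mul_conjTranspose [Fintype m] [Field R] [StarRing R]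
    {L : Matrix m m R}
    (hL : L.IsLowerTriangular) (hdiag : ∀ i, L i i ≠ 0) : IsUnit (L * Lᴴ) := by
  have hdet := hL.isUnit_det fun i => (hdiag i).isUnit
  rw [isUnit_iff_isUnit_det, det_mul, det_conjTranspose]
  exact hdet.mul hdet.star

theorem IsLowerTriangular.submatrix_of_strictMono {n : Type*} [LinearOrder n] [Zero R]
    {L : Matrix m m R} (hL : L.IsLowerTriangular) {f : n → m} (hf : StrictMono f) :
    (L.submatrix f f).IsLowerTriangular :=
  fun _ _ hij => hL (show toDual _ < toDual _ from hf hij)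

end LowerTriangular

theorem mul_conjTranspose_submatrix_of_mul_conjTranspose_eq_one {l m n R : Type*} [Fintype n]
    [DecidableEq l] [DecidableEq m] [Semiring R] [StarRing R] {Q : Matrix m n R}
    (hQ : Q * Qᴴ = 1) {f : l → m} (hf : Function.Injective f) :
    Q.submatrix f id * (Q.submatrix f id)ᴴ = 1 := by
  rw [conjTranspose_submatrix, ← submatrix_mul _ _ _ _ _ Function.bijective_id, hQ,
    submatrix_one f hf]

theorem mul_mul_conjTranspose_of_mul_conjTranspose_eq_one {m n R : Type*} [Fintype m]
    [Fintype n] [DecidableEq m] [Semiring R] [StarRing R] (L : Matrix m m R) {Q : Matrix m n R}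
    (hQ : Q * Qᴴ = 1) : L * Q * (L * Q)ᴴ = L * Lᴴ := by
  rw [conjTranspose_mul, Matrix.mul_assoc, ← Matrix.mul_assoc Q, hQ, Matrix.one_mul]

theorem IsLowerTriangular.submatrix_castLE_mul {K k : ℕ} {n R : Type*}
    [NonUnitalNonAssocSemiring R] {L : Matrix (Fin K) (Fin K) R} (hL : L.IsLowerTriangular)
    (Q : Matrix (Fin K) n R) (h : k ≤ K) :
    (L * Q).submatrix (Fin.castLE h) id =
      L.submatrix (Fin.castLE h) (Fin.castLE h) * Q.submatrix (Fin.castLE h) id := by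
  ext i j
  simp only [submatrix_apply, mul_apply, id]
  refine (Fintype.sum_of_injective _ (Fin.castLE_injective h) _ _ (fun c hc => ?_)
    fun _ => rfl).symm
  have hic : Fin.castLE h i < c := by
    by_contra! hci
    exact hc ⟨⟨c, lt_of_le_of_lt hci i.2⟩, rfl⟩
  rw [show L (Fin.castLE h i) c = 0 from hL hic, zero_mul]

end Matrix

theorem lq_diag_via_inverse_gram_general (K N : ℕ)
    (H : Matrix (Fin K) (Fin N) ℂ) (L : Matrix (Fin K) (Fin K) ℂ)
    (Qb : Matrix (Fin K) (Fin N) ℂ)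
    (hL : ∀ i j : Fin K, i < j → L i j = 0)
    (hLdiag : ∀ i : Fin K, L i i ≠ 0)
    (hQ : Qb * Qb.conjTranspose = 1)
    (hH : H = L * Qb) (k : Fin K)
    (Hk : Matrix (Fin (k.1 + 1)) (Fin N) ℂ)
    (hHk : ∀ (i : Fin (k.1 + 1)) (j : Fin N), Hk i j = H (Fin.castLE k.2 i) j) :
    IsUnit (Hk * Hk.conjTranspose) ∧
      (Hk * Hk.conjTranspose)⁻¹ (Fin.last k.1) (Fin.last k.1) =
        ((‖L k k‖ ^ 2)⁻¹ : ℝ) := by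
  have hLtri : L.IsLowerTriangular := fun i j hij => hL i j hij
  set Lk := L.submatrix (Fin.castLE k.2) (Fin.castLE k.2)
  have hLktri : Lk.IsLowerTriangular := hLtri.submatrix_of_strictMono (Fin.strictMono_castLE _)
  have hLkdiag : ∀ i, Lk i i ≠ 0 := fun i => hLdiag _
  have hHkLQ : Hk = Lk * Qb.submatrix (Fin.castLE k.2) id := by
    rw [← hLtri.submatrix_castLE_mul, ← hH]
    exact Matrix.ext hHk
  have hGram : Hk * Hkᴴ = Lk * Lkᴴ := by
    rw [hHkLQ, mul_mul_conjTranspose_of_mul_conjTranspose_eq_one _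
      (mul_conjTranspose_submatrix_of_mul_conjTranspose_eq_one hQ (Fin.castLE_injective _))]
  rw [hGram]
  exact ⟨hLktri.isUnit_mul_conjTranspose hLkdiag,
    hLktri.mul_conjTranspose_inv_apply_of_isTop hLkdiag Fin.le_last⟩

/-- **Diagonal of the LQ factor via inverse Gram matrices.** If `H = L·Q̄` with `L`
lower triangular with nonzero diagonal and `Q̄` having orthonormal rows, then for each
`k` the Gram matrix `Hₖ Hₖᴴ` of the first `k+1` rows of `H` is invertible and the
bottom-right entry of its inverse equals `|L_{k,k}|⁻²`. -/
theorem lq_diag_via_inverse_gram (K N : ℕ) (hK : 0 < K) (hN : 0 < N)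
    (H : Matrix (Fin K) (Fin N) ℂ) (L : Matrix (Fin K) (Fin K) ℂ)
    (Qb : Matrix (Fin K) (Fin N) ℂ)
    (hL : ∀ i j : Fin K, i < j → L i j = 0)
    (hLdiag : ∀ i : Fin K, L i i ≠ 0)
    (hQ : Qb * Qb.conjTranspose = 1)
    (hH : H = L * Qb) (k : Fin K)
    (Hk : Matrix (Fin (k.1 + 1)) (Fin N) ℂ)
    (hHk : ∀ (i : Fin (k.1 + 1)) (j : Fin N), Hk i j = H (Fin.castLE k.2 i) j) :
    IsUnit (Hk * Hk.conjTranspose) ∧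
      (Hk * Hk.conjTranspose)⁻¹ (Fin.last k.1) (Fin.last k.1) =
        ((‖L k k‖ ^ 2)⁻¹ : ℝ) :=
  lq_diag_via_inverse_gram_general K N H L Qb hL hLdiag hQ hH k Hk hHk
end

section
/- Closed form of the zero-temperature entropy for the Marchenko–Pastur R-transform: for every α with 0 < α < 1 and every χ > 0, χ·R(−χ) − ∫₀^χ R(−w) dw = (1 − α − √((1−α)² + 4αχ))/(2α) + ((1−α)/α)·log( (1 − α + √((1−α)² + 4αχ)) / (2(1−α)) ), where for w > 0 we set R(−w) = (α − 1 + √((1−α)² + 4αw)) / (2αw) (which extends continuously to w = 0 with value 1/(1−α), so the integral is a convergent improper Riemann/Lebesgue integral over (0, χ)). -/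
/-!
With `a = α` and `b = 1 - α`, rationalizing gives `(√(b² + 4aw) - b) / (2aw) = 2 / (√(b² + 4aw) + b)`,
which removes the singularity at `w = 0`. The right-hand side has the elementary antiderivative
`(√(b² + 4aw) - b log (√(b² + 4aw) + b)) / a`, so the integral is evaluated by the fundamental
theorem of calculus, and the closed form follows by collecting the logarithms.
-/

open Real MeasureTheory

namespace MarchenkoPastur

variable {a b : ℝ}

lemma sqrt_sub_div_eq_two_div_sqrt_add {w : ℝ} (hdisc : 0 ≤ b ^ 2 + 4 * a * w) (haw : a * w ≠ 0)
    (hsb : √(b ^ 2 + 4 * a * w) + b ≠ 0) :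
    (√(b ^ 2 + 4 * a * w) - b) / (2 * a * w) = 2 / (√(b ^ 2 + 4 * a * w) + b) := by
  rw [div_eq_div_iff (by simpa [mul_assoc] using haw) hsb]
  linear_combination Real.sq_sqrt hdisc

noncomputable def entropyPrimitive (a b w : ℝ) : ℝ :=
  (√(b ^ 2 + 4 * a * w) - b * log (√(b ^ 2 + 4 * a * w) + b)) / a

lemma hasDerivAt_entropyPrimitive {w : ℝ} (ha : a ≠ 0) (hdisc : 0 < b ^ 2 + 4 * a * w)
    (hsb : √(b ^ 2 + 4 * a * w) + b ≠ 0) :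
    HasDerivAt (entropyPrimitive a b) (2 / (√(b ^ 2 + 4 * a * w) + b)) w := by
  have hinner : HasDerivAt (fun x => b ^ 2 + 4 * a * x) (4 * a) w := by
    simpa using ((hasDerivAt_id w).const_mul (4 * a)).const_add (b ^ 2)
  have hsqrt := hinner.sqrt hdisc.ne'
  have hlog := (hsqrt.add_const b).log hsb
  refine ((hsqrt.sub (hlog.const_mul b)).div_const a).congr_deriv ?_
  have hs : √(b ^ 2 + 4 * a * w) ≠ 0 := (Real.sqrt_pos.2 hdisc).ne'
  field_simp
  ring

lemma entropyPrimitive_zero (hb : 0 ≤ b) :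
    entropyPrimitive a b 0 = (b - b * log (2 * b)) / a := by
  simp [entropyPrimitive, Real.sqrt_sq hb, two_mul]

lemma integral_two_div_sqrt_add (ha : 0 < a) (hb : 0 < b) {χ : ℝ} (hχ : 0 ≤ χ) :
    ∫ w in (0 : ℝ)..χ, 2 / (√(b ^ 2 + 4 * a * w) + b) =
      entropyPrimitive a b χ - entropyPrimitive a b 0 := by
  have hdisc : ∀ w ∈ Set.uIcc 0 χ, 0 < b ^ 2 + 4 * a * w := fun w hw => by
    rw [Set.uIcc_of_le hχ] at hw
    nlinarith [hw.1]
  have hsb : ∀ w ∈ Set.uIcc 0 χ, √(b ^ 2 + 4 * a * w) + b ≠ 0 := fun w _ => by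
    positivity
  refine intervalIntegral.integral_eq_sub_of_hasDerivAt
    (fun w hw => hasDerivAt_entropyPrimitive ha.ne' (hdisc w hw) (hsb w hw)) ?_
  refine ContinuousOn.intervalIntegrable (continuousOn_const.div ?_ hsb)
  fun_prop

end MarchenkoPastur

open Real MeasureTheory MarchenkoPastur

/-- **Closed form of the zero-temperature entropy for the Marchenko–Pastur R-transform.**
For `0 < α < 1` and `χ > 0`, with `R(-w) = (α - 1 + √((1-α)² + 4αw))/(2αw)`,
`χ R(-χ) - ∫₀^χ R(-w) dw` equals
`(1 - α - √((1-α)² + 4αχ))/(2α) + ((1-α)/α) log((1 - α + √((1-α)² + 4αχ))/(2(1-α)))`. -/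
theorem zero_temperature_entropy_closed_form (α χ : ℝ)
    (hα0 : 0 < α) (hα1 : α < 1) (hχ : 0 < χ) :
    χ * ((α - 1 + Real.sqrt ((1 - α) ^ 2 + 4 * α * χ)) / (2 * α * χ)) -
        ∫ w in Set.Ioo (0 : ℝ) χ,
          (α - 1 + Real.sqrt ((1 - α) ^ 2 + 4 * α * w)) / (2 * α * w) =
      (1 - α - Real.sqrt ((1 - α) ^ 2 + 4 * α * χ)) / (2 * α) +
        ((1 - α) / α) *
          Real.log ((1 - α + Real.sqrt ((1 - α) ^ 2 + 4 * α * χ)) / (2 * (1 - α))) := by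
  have hb : 0 < 1 - α := by linarith
  have hR : ∀ w ∈ Set.Ioo 0 χ, (α - 1 + √((1 - α) ^ 2 + 4 * α * w)) / (2 * α * w) =
      2 / (√((1 - α) ^ 2 + 4 * α * w) + (1 - α)) := fun w hw => by
    rw [← sqrt_sub_div_eq_two_div_sqrt_add (by nlinarith [hw.1]) (mul_pos hα0 hw.1).ne'
      (by positivity)]
    congr 1
    ring
  rw [setIntegral_congr_fun measurableSet_Ioo hR, ← integral_Ioc_eq_integral_Ioo,
    ← intervalIntegral.integral_of_le hχ.le, integral_two_div_sqrt_add hα0 hb hχ.le,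
    entropyPrimitive_zero hb.le, entropyPrimitive, add_comm (1 - α) (√_),
    Real.log_div (by positivity) (by positivity)]
  field_simp
  ring
end
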